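/- arXiv:math/0304389 — 3 statements merged into one kernel-verified Lean document; each statement's English description precedes it below -/
import Mathlib

section
/- Let X and Y be compact metric spaces, μ a Borel probability measure on X, ν a Borel probability measure on Y, and c : X × Y → [0, +∞) a continuous cost function. Then the Kantorovich duality formula holds: min { ∫_{X×Y} c dγ : γ ∈ Π(μ,ν) } = sup { ∫_X h dμ + ∫_Y k dν : h ∈ C(X), k ∈ C(Y), h(x) + k(y) ≤ c(x,y) for all (x,y) ∈ X × Y }. -/
/-!
Weak duality is integration of `h x + k y ≤ c (x, y)` against a plan. For the converse, the
functional `Q f = inf {∫ h dμ + ∫ k dν : f ≤ h ⊕ k}` on `C(X × Y)` is sublinear, so Hahn–Banach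
gives a linear `L ≤ Q` with `L (-c) = Q (-c)`. Squeezing `L (h ⊕ k)` between `-Q (-(h ⊕ k))` and
`Q (h ⊕ k)` forces `L (h ⊕ k) = ∫ h dμ + ∫ k dν`, and `L ≤ Q` makes `L` positive. By
Riesz–Markov–Kakutani `L` is integration against a measure `γ₀`, which therefore has marginals
`μ` and `ν`, and its cost `L c = -Q (-c)` is the supremum of the dual problem.
-/

open MeasureTheory
open scoped CompactlySupported Pointwise

namespace ContinuousMap

variable {X Y : Type*} [TopologicalSpace X] [TopologicalSpace Y]

def prodAdd (h : C(X, ℝ)) (k : C(Y, ℝ)) : C(X × Y, ℝ) := h.comp fst + k.comp snd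

@[simp]
theorem prodAdd_apply (h : C(X, ℝ)) (k : C(Y, ℝ)) (p : X × Y) :
    h.prodAdd k p = h p.1 + k p.2 := rfl

theorem integrable_of_compactSpace [CompactSpace X] [MeasurableSpace X] [OpensMeasurableSpace X]
    (f : C(X, ℝ)) (μ : Measure X) [IsFiniteMeasure μ] : Integrable f μ :=
  f.continuous.integrable_of_hasCompactSupport (HasCompactSupport.of_compactSpace f)

end ContinuousMap

section Plan

variable {X Y : Type*} [MeasurableSpace X] [MeasurableSpace Y] {μ : Measure X} {ν : Measure Y}
  {γ : Measure (X × Y)} {h : X → ℝ} {k : Y → ℝ}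

theorem MeasureTheory.Integrable.add_comp_fst_snd (hγμ : γ.map Prod.fst = μ)
    (hγν : γ.map Prod.snd = ν) (hh : Integrable h μ) (hk : Integrable k ν) :
    Integrable (fun p => h p.1 + k p.2) γ := by
  subst hγμ hγν
  exact (hh.comp_measurable measurable_fst).add (hk.comp_measurable measurable_snd)

theorem integral_add_comp_fst_snd (hγμ : γ.map Prod.fst = μ) (hγν : γ.map Prod.snd = ν)
    (hh : Integrable h μ) (hk : Integrable k ν) :
    ∫ p, (h p.1 + k p.2) ∂γ = ∫ x, h x ∂μ + ∫ y, k y ∂ν := by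
  subst hγμ hγν
  rw [integral_map measurable_fst.aemeasurable hh.aestronglyMeasurable,
    integral_map measurable_snd.aemeasurable hk.aestronglyMeasurable]
  exact integral_add (hh.comp_measurable measurable_fst) (hk.comp_measurable measurable_snd)

theorem integral_add_le_integral_of_le (hγμ : γ.map Prod.fst = μ) (hγν : γ.map Prod.snd = ν)
    (hh : Integrable h μ) (hk : Integrable k ν) {c : X × Y → ℝ} (hc : Integrable c γ)
    (hle : ∀ x y, h x + k y ≤ c (x, y)) : ∫ x, h x ∂μ + ∫ y, k y ∂ν ≤ ∫ p, c p ∂γ := by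
  rw [← integral_add_comp_fst_snd hγμ hγν hh hk]
  exact integral_mono (.add_comp_fst_snd hγμ hγν hh hk) hc fun p => hle p.1 p.2

theorem le_integral_add_of_le_add [IsProbabilityMeasure μ] [IsProbabilityMeasure ν] {a : ℝ}
    (hh : Integrable h μ) (hk : Integrable k ν) (hle : ∀ x y, a ≤ h x + k y) :
    a ≤ ∫ x, h x ∂μ + ∫ y, k y ∂ν := by
  have hμ : (μ.prod ν).map Prod.fst = μ := by simp
  have hν : (μ.prod ν).map Prod.snd = ν := by simp
  rw [← integral_add_comp_fst_snd hμ hν hh hk]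
  simpa using integral_mono (integrable_const a) (.add_comp_fst_snd hμ hν hh hk)
    fun p => hle p.1 p.2

end Plan

theorem exists_linearMap_le_sublinear_eq {E : Type*} [AddCommGroup E] [Module ℝ E] (N : E → ℝ)
    (N_hom : ∀ t : ℝ, 0 < t → ∀ x, N (t • x) = t * N x)
    (N_add : ∀ x y, N (x + y) ≤ N x + N y) (x : E) :
    ∃ g : E →ₗ[ℝ] ℝ, (∀ y, g y ≤ N y) ∧ g x = N x := by
  have N_zero : N 0 = 0 := by
    have := N_hom 2 two_pos 0
    rw [smul_zero] at this
    linarith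
  have mul_le_smul : ∀ t : ℝ, t * N x ≤ N (t • x) := by
    intro t
    rcases lt_trichotomy t 0 with ht | rfl | ht
    · have := N_add (t • x) ((-t) • x)
      rw [← add_smul, add_neg_cancel, zero_smul, N_zero, N_hom (-t) (neg_pos.2 ht)] at this
      linarith
    · simp [N_zero]
    · exact (N_hom t ht x).ge
  let f : E →ₗ.[ℝ] ℝ := LinearPMap.mkSpanSingleton' x (N x) fun t htx => by
    have h₁ := mul_le_smul t
    have h₂ := mul_le_smul (-t)
    rw [neg_smul, htx, neg_zero, N_zero] at h₂
    rw [htx, N_zero] at h₁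
    simp only [RingHom.id_apply, smul_eq_mul]
    linarith
  have hf : ∀ v : f.domain, f v ≤ N v := by
    rintro ⟨v, hv⟩
    obtain ⟨t, rfl⟩ := Submodule.mem_span_singleton.1 hv
    rw [LinearPMap.mkSpanSingleton'_apply]
    exact mul_le_smul t
  obtain ⟨g, hgf, hgN⟩ := exists_extension_of_le_sublinear f N N_hom N_add hf
  exact ⟨g, hgN, (hgf ⟨x, Submodule.mem_span_singleton_self x⟩).trans
    (LinearPMap.mkSpanSingleton'_apply_self _ _ _ _)⟩

theorem exists_isFiniteMeasure_integral_eq_of_nonneg {Z : Type*} [TopologicalSpace Z]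
    [CompactSpace Z] [T2Space Z] [MeasurableSpace Z] [BorelSpace Z] (L : C(Z, ℝ) →ₗ[ℝ] ℝ)
    (hL : ∀ f, 0 ≤ f → 0 ≤ L f) :
    ∃ γ : Measure Z, IsFiniteMeasure γ ∧ ∀ f : C(Z, ℝ), ∫ z, f z ∂γ = L f := by
  let Λ : C_c(Z, ℝ) →ₚ[ℝ] ℝ := PositiveLinearMap.mk₀
    { toFun f := L f.toContinuousMap
      map_add' f g := L.map_add _ _
      map_smul' t f := L.map_smul t _ }
    fun f hf => hL _ hf
  exact ⟨RealRMK.rieszMeasure Λ, inferInstance, fun f =>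
    RealRMK.integral_rieszMeasure Λ (CompactlySupportedContinuousMap.continuousMapEquiv f)⟩

theorem MeasureTheory.Measure.map_eq_of_forall_integral_comp_eq {Z W : Type*} [MeasurableSpace Z]
    [TopologicalSpace W] [HasOuterApproxClosed W] [MeasurableSpace W] [BorelSpace W]
    {γ : Measure Z} [IsFiniteMeasure γ] {μ : Measure W} [IsFiniteMeasure μ] {φ : Z → W}
    (hφ : Measurable φ) (h : ∀ g : C(W, ℝ), ∫ z, g (φ z) ∂γ = ∫ w, g w ∂μ) : γ.map φ = μ :=
  ext_of_forall_integral_eq_of_IsFiniteMeasure fun g => by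
    rw [integral_map hφ.aemeasurable g.continuous.aestronglyMeasurable]
    exact h g.toContinuousMap

section Majorant

variable {X Y : Type*} [TopologicalSpace X] [MeasurableSpace X] [TopologicalSpace Y]
  [MeasurableSpace Y] (μ : Measure X) (ν : Measure Y)

def majorantValues (f : C(X × Y, ℝ)) : Set ℝ :=
  {r | ∃ (h : C(X, ℝ)) (k : C(Y, ℝ)), f ≤ h.prodAdd k ∧ ∫ x, h x ∂μ + ∫ y, k y ∂ν = r}

noncomputable def majorantInf (f : C(X × Y, ℝ)) : ℝ := sInf (majorantValues μ ν f)

variable {μ ν}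

theorem smul_majorantValues_subset {t : ℝ} (ht : 0 ≤ t) (f : C(X × Y, ℝ)) :
    t • majorantValues μ ν f ⊆ majorantValues μ ν (t • f) := by
  rintro _ ⟨_, ⟨h, k, hf, rfl⟩, rfl⟩
  refine ⟨t • h, t • k, fun p => ?_, ?_⟩
  · simpa [mul_add] using mul_le_mul_of_nonneg_left (hf p) ht
  · simp [integral_const_mul, mul_add]

theorem majorantValues_smul {t : ℝ} (ht : 0 < t) (f : C(X × Y, ℝ)) :
    majorantValues μ ν (t • f) = t • majorantValues μ ν f := by
  refine (Set.subset_smul_set_iff₀ ht.ne').2 ?_ |>.antisymm (smul_majorantValues_subset ht.le f)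
  simpa [smul_smul, ht.ne'] using smul_majorantValues_subset (inv_nonneg.2 ht.le) (t • f)

theorem majorantInf_smul {t : ℝ} (ht : 0 < t) (f : C(X × Y, ℝ)) :
    majorantInf μ ν (t • f) = t * majorantInf μ ν f := by
  rw [majorantInf, majorantValues_smul ht, Real.sInf_smul_of_nonneg ht.le, smul_eq_mul,
    majorantInf]

variable [CompactSpace X] [CompactSpace Y]

theorem majorantValues_nonempty (f : C(X × Y, ℝ)) : (majorantValues μ ν f).Nonempty :=
  ⟨_, .const X ‖f‖, 0, fun p => by simpa using (le_abs_self _).trans (f.norm_coe_le_norm p), rfl⟩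

theorem le_majorantInf {f : C(X × Y, ℝ)} {b : ℝ} (hb : ∀ r ∈ majorantValues μ ν f, b ≤ r) :
    b ≤ majorantInf μ ν f :=
  le_csInf (majorantValues_nonempty f) hb

theorem neg_majorantInf_neg_le {c : C(X × Y, ℝ)} {b : ℝ}
    (hb : ∀ (h : C(X, ℝ)) (k : C(Y, ℝ)), (∀ x y, h x + k y ≤ c (x, y)) →
      ∫ x, h x ∂μ + ∫ y, k y ∂ν ≤ b) :
    -majorantInf μ ν (-c) ≤ b := by
  refine neg_le.2 (le_majorantInf ?_)
  rintro _ ⟨h, k, hle, rfl⟩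
  have := hb (-h) (-k) fun x y => by
    have : -c (x, y) ≤ h x + k y := hle (x, y)
    simp only [ContinuousMap.neg_apply]
    linarith
  simp only [ContinuousMap.neg_apply, integral_neg] at this
  linarith

variable [OpensMeasurableSpace X] [OpensMeasurableSpace Y]
  [IsProbabilityMeasure μ] [IsProbabilityMeasure ν]

theorem majorantValues_bddBelow (f : C(X × Y, ℝ)) : BddBelow (majorantValues μ ν f) := by
  refine ⟨-‖f‖, ?_⟩
  rintro _ ⟨h, k, hf, rfl⟩
  refine le_integral_add_of_le_add (h.integrable_of_compactSpace μ)
    (k.integrable_of_compactSpace ν) fun x y =>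
      (abs_le.1 (f.norm_coe_le_norm (x, y))).1.trans (hf (x, y))

theorem majorantInf_le {f : C(X × Y, ℝ)} {r : ℝ} (hr : r ∈ majorantValues μ ν f) :
    majorantInf μ ν f ≤ r :=
  csInf_le (majorantValues_bddBelow f) hr

theorem majorantInf_add (f g : C(X × Y, ℝ)) :
    majorantInf μ ν (f + g) ≤ majorantInf μ ν f + majorantInf μ ν g := by
  have hsub : majorantValues μ ν f + majorantValues μ ν g ⊆ majorantValues μ ν (f + g) := by
    rintro _ ⟨_, ⟨h₁, k₁, hf, rfl⟩, _, ⟨h₂, k₂, hg, rfl⟩, rfl⟩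
    refine ⟨h₁ + h₂, k₁ + k₂, fun p => ?_, ?_⟩
    · simpa [add_add_add_comm] using add_le_add (hf p) (hg p)
    · simp only [ContinuousMap.add_apply]
      rw [integral_add (h₁.integrable_of_compactSpace μ) (h₂.integrable_of_compactSpace μ),
        integral_add (k₁.integrable_of_compactSpace ν) (k₂.integrable_of_compactSpace ν)]
      ring
  rw [majorantInf, majorantInf, majorantInf, ← csInf_add (majorantValues_nonempty f)
    (majorantValues_bddBelow f) (majorantValues_nonempty g) (majorantValues_bddBelow g)]
  exact csInf_le_csInf (majorantValues_bddBelow _)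
    ((majorantValues_nonempty f).add (majorantValues_nonempty g)) hsub

end Majorant

section Functional

variable {X Y : Type*} [TopologicalSpace X] [CompactSpace X] [MeasurableSpace X]
  [OpensMeasurableSpace X] [TopologicalSpace Y] [CompactSpace Y] [MeasurableSpace Y]
  [OpensMeasurableSpace Y] {μ : Measure X} {ν : Measure Y} [IsProbabilityMeasure μ]
  [IsProbabilityMeasure ν] {L : C(X × Y, ℝ) →ₗ[ℝ] ℝ}

theorem LinearMap.apply_prodAdd_of_le_majorantInf (hL : ∀ f, L f ≤ majorantInf μ ν f)
    (h : C(X, ℝ)) (k : C(Y, ℝ)) : L (h.prodAdd k) = ∫ x, h x ∂μ + ∫ y, k y ∂ν := by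
  have upper : L (h.prodAdd k) ≤ ∫ x, h x ∂μ + ∫ y, k y ∂ν :=
    (hL _).trans (majorantInf_le ⟨h, k, le_rfl, rfl⟩)
  have lower : L (-h.prodAdd k) ≤ -(∫ x, h x ∂μ + ∫ y, k y ∂ν) :=
    (hL _).trans <| majorantInf_le ⟨-h, -k, fun p => by simp,
      by simp only [ContinuousMap.neg_apply, integral_neg, neg_add]⟩
  rw [map_neg] at lower
  linarith

theorem LinearMap.apply_nonneg_of_le_majorantInf (hL : ∀ f, L f ≤ majorantInf μ ν f)
    {f : C(X × Y, ℝ)} (hf : 0 ≤ f) : 0 ≤ L f := by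
  have : L (-f) ≤ 0 :=
    (hL _).trans (majorantInf_le ⟨0, 0, fun p => by simpa using hf p, by simp⟩)
  rw [map_neg] at this
  linarith

end Functional

theorem exists_plan_integral_eq_neg_majorantInf_neg {X Y : Type*} [MetricSpace X] [CompactSpace X]
    [MeasurableSpace X] [BorelSpace X] [MetricSpace Y] [CompactSpace Y] [MeasurableSpace Y]
    [BorelSpace Y] (μ : Measure X) [IsProbabilityMeasure μ] (ν : Measure Y)
    [IsProbabilityMeasure ν] (c : C(X × Y, ℝ)) :
    ∃ γ : Measure (X × Y), γ.map Prod.fst = μ ∧ γ.map Prod.snd = ν ∧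
      ∫ p, c p ∂γ = -majorantInf μ ν (-c) := by
  obtain ⟨L, hLQ, hLc⟩ := exists_linearMap_le_sublinear_eq (majorantInf μ ν)
    (fun _ ht => majorantInf_smul ht) majorantInf_add (-c)
  obtain ⟨γ, _, hγL⟩ := exists_isFiniteMeasure_integral_eq_of_nonneg L fun _ =>
    L.apply_nonneg_of_le_majorantInf hLQ
  refine ⟨γ, Measure.map_eq_of_forall_integral_comp_eq measurable_fst fun g => ?_,
    Measure.map_eq_of_forall_integral_comp_eq measurable_snd fun g => ?_, ?_⟩
  · simpa using (hγL (g.prodAdd 0)).trans (L.apply_prodAdd_of_le_majorantInf hLQ g 0)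
  · simpa using
      (hγL (ContinuousMap.prodAdd 0 g)).trans (L.apply_prodAdd_of_le_majorantInf hLQ 0 g)
  · rw [hγL, ← neg_neg (L c), ← map_neg, hLc]

theorem kantorovich_duality_compact_general
    {X Y : Type*} [MetricSpace X] [CompactSpace X] [MeasurableSpace X] [BorelSpace X]
    [MetricSpace Y] [CompactSpace Y] [MeasurableSpace Y] [BorelSpace Y]
    (μ : Measure X) [IsProbabilityMeasure μ] (ν : Measure Y) [IsProbabilityMeasure ν]
    (c : X × Y → ℝ) (hc : Continuous c) :
    ∃ γ₀ : Measure (X × Y),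
      γ₀.map Prod.fst = μ ∧ γ₀.map Prod.snd = ν ∧
      (∀ γ : Measure (X × Y), γ.map Prod.fst = μ → γ.map Prod.snd = ν →
        ∫ p, c p ∂γ₀ ≤ ∫ p, c p ∂γ) ∧
      IsLUB {r : ℝ | ∃ (h : C(X, ℝ)) (k : C(Y, ℝ)),
          (∀ x y, h x + k y ≤ c (x, y)) ∧ r = ∫ x, h x ∂μ + ∫ y, k y ∂ν}
        (∫ p, c p ∂γ₀) := by
  set D := {r : ℝ | ∃ (h : C(X, ℝ)) (k : C(Y, ℝ)),
    (∀ x y, h x + k y ≤ c (x, y)) ∧ r = ∫ x, h x ∂μ + ∫ y, k y ∂ν}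
  have weak_duality : ∀ γ : Measure (X × Y), γ.map Prod.fst = μ → γ.map Prod.snd = ν →
      ∫ p, c p ∂γ ∈ upperBounds D := by
    rintro γ hγμ hγν _ ⟨h, k, hle, rfl⟩
    have : IsProbabilityMeasure (γ.map Prod.fst) := hγμ ▸ inferInstance
    have : IsProbabilityMeasure γ := Measure.isProbabilityMeasure_of_map Prod.fst
    exact integral_add_le_integral_of_le hγμ hγν (h.integrable_of_compactSpace μ)
      (k.integrable_of_compactSpace ν) (ContinuousMap.integrable_of_compactSpace ⟨c, hc⟩ γ) hle
  obtain ⟨γ₀, hγ₀μ, hγ₀ν, hcost⟩ := exists_plan_integral_eq_neg_majorantInf_neg μ ν ⟨c, hc⟩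
  have hlub : IsLUB D (∫ p, c p ∂γ₀) := ⟨weak_duality γ₀ hγ₀μ hγ₀ν, fun b hb =>
    hcost ▸ neg_majorantInf_neg_le fun h k hle => hb ⟨h, k, hle, rfl⟩⟩
  exact ⟨γ₀, hγ₀μ, hγ₀ν, fun γ hγμ hγν => hlub.2 (weak_duality γ hγμ hγν), hlub⟩

/-- **Kantorovich duality on compact metric spaces.**
For compact metric spaces `X, Y`, Borel probability measures `μ, ν` and a
continuous nonnegative cost `c`, there is an optimal plan `γ₀` whose cost
equals the supremum of `∫ h dμ + ∫ k dν` over continuous pairs `(h, k)` with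
`h x + k y ≤ c (x, y)`. -/
theorem kantorovich_duality_compact
    {X Y : Type*} [MetricSpace X] [CompactSpace X] [MeasurableSpace X] [BorelSpace X]
    [MetricSpace Y] [CompactSpace Y] [MeasurableSpace Y] [BorelSpace Y]
    (μ : Measure X) [IsProbabilityMeasure μ] (ν : Measure Y) [IsProbabilityMeasure ν]
    (c : X × Y → ℝ) (hc : Continuous c) (hc0 : ∀ p, 0 ≤ c p) :
    ∃ γ₀ : Measure (X × Y),
      γ₀.map Prod.fst = μ ∧ γ₀.map Prod.snd = ν ∧
      (∀ γ : Measure (X × Y), γ.map Prod.fst = μ → γ.map Prod.snd = ν →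
        ∫ p, c p ∂γ₀ ≤ ∫ p, c p ∂γ) ∧
      IsLUB {r : ℝ | ∃ (h : C(X, ℝ)) (k : C(Y, ℝ)),
          (∀ x y, h x + k y ≤ c (x, y)) ∧ r = ∫ x, h x ∂μ + ∫ y, k y ∂ν}
        (∫ p, c p ∂γ₀) :=
  kantorovich_duality_compact_general μ ν c hc
end

section
/- Let f : ℝⁿ → ℝ be a convex function. Then the set of points where f is not differentiable is σ-finite with respect to the (n−1)-dimensional Hausdorff measure; i.e., it can be covered by countably many Borel sets each of finite ℋ^{n−1} measure. -/
/-!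
On each line a convex function has one-sided derivatives `∂⁻ᵥ f x ≤ ∂⁺ᵥ f x`
(`leftLineDeriv`, `rightLineDeriv`). If they agree along every vector of a basis, `f` is
differentiable at `x`: with `L` the linear map built from these partial derivatives, the convex
function `φ h = f (x + h) - f x - L h` is bounded above, by Jensen's inequality, by `o(h)` terms
along the axes, and below by `-φ (-h)`.

So at a non-differentiability point some basis direction `v` has a jump
`∂⁻ᵥ f x ≤ a < b ≤ ∂⁺ᵥ f x` with `a, b` rational. On a bounded set `s` of such points, take
`ℓ v = 1` and the projection `P z = z - ℓ z • v` onto the hyperplane `ker ℓ`. For `x, y ∈ s` with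
`δ = ℓ (x - y) > 0`, the points `y + δ v` and `x - δ v` differ from `x` and `y` by `P x - P y`, so
the slope bounds and the local Lipschitz bound of `f` give `(b - a) δ ≤ 2 K ‖P x - P y‖`. Hence `P`
is injective on `s` with Lipschitz inverse, and `ℋ^{n-1}(s)` is at most a multiple of the
`ℋ^{n-1}`-measure of a bounded piece of the `(n-1)`-dimensional space `ker ℓ`.
-/

open MeasureTheory Set Filter Topology Asymptotics Metric
open scoped ENNReal NNReal

section

variable {E : Type*} [NormedAddCommGroup E] [NormedSpace ℝ E]

noncomputable def leftLineDeriv (f : E → ℝ) (x v : E) : ℝ :=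
  derivWithin (fun t : ℝ => f (x + t • v)) (Iio 0) 0

noncomputable def rightLineDeriv (f : E → ℝ) (x v : E) : ℝ :=
  derivWithin (fun t : ℝ => f (x + t • v)) (Ioi 0) 0

theorem le_hausdorffMeasure_image_of_antilipschitzWith_domRestrict {X Y : Type*} [EMetricSpace X]
    [EMetricSpace Y] [MeasurableSpace X] [BorelSpace X] [MeasurableSpace Y] [BorelSpace Y]
    {d : ℝ} (hd : 0 ≤ d) {s : Set X} {g : X → Y} {K : ℝ≥0}
    (hg : AntilipschitzWith K (s.domRestrict g)) :
    μH[d] s ≤ (K : ℝ≥0∞) ^ d * μH[d] (g '' s) := by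
  have h := hg.le_hausdorffMeasure_image hd univ
  rwa [image_univ, range_domRestrict, ← isometry_subtype_coe.hausdorffMeasure_image (.inl hd),
    image_univ, Subtype.range_coe] at h

theorem Submodule.hausdorffMeasure_lt_top_of_isBounded [MeasurableSpace E] [BorelSpace E]
    (K : Submodule ℝ E) [FiniteDimensional ℝ K] {t : Set E} (htK : t ⊆ K)
    (ht : Bornology.IsBounded t) :
    μH[Module.finrank ℝ K] t < ∞ := by
  have hval : Subtype.val '' (Subtype.val ⁻¹' t : Set K) = t := by
    rwa [image_preimage_eq_inter_range, Subtype.range_coe, inter_eq_left]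
  rw [← hval, isometry_subtype_coe.hausdorffMeasure_image (.inl (Nat.cast_nonneg _))]
  exact (Bornology.isBounded_image_subtype_val.1 (hval.symm ▸ ht)).measure_lt_top

theorem exists_measurable_cover_of_countable {α : Type*} [MeasurableSpace α]
    (μ : Measure α) {S : Set (Set α)} (hS : S.Countable) (hfin : ∀ s ∈ S, μ s < ∞) {t : Set α}
    (ht : t ⊆ ⋃₀ S) :
    ∃ B : ℕ → Set α, (∀ k, MeasurableSet (B k) ∧ μ (B k) < ∞) ∧ t ⊆ ⋃ k, B k := by
  obtain ⟨g, hg⟩ := (hS.insert ∅).exists_eq_range (insert_nonempty _ _)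
  refine ⟨fun k => toMeasurable μ (g k), fun k => ⟨measurableSet_toMeasurable _ _, ?_⟩, ?_⟩
  · rw [measure_toMeasurable]
    rcases (hg ▸ mem_range_self k : g k ∈ insert ∅ S) with h | h
    · simp [h]
    · exact hfin _ h
  · intro x hx
    obtain ⟨s, hs, hxs⟩ := ht hx
    obtain ⟨k, rfl⟩ : s ∈ range g := hg ▸ mem_insert_of_mem _ hs
    exact mem_iUnion.2 ⟨k, subset_toMeasurable _ _ hxs⟩

namespace ConvexOn

variable {ι : Type*} [Fintype ι] {f φ : E → ℝ}

theorem comp_line (hf : ConvexOn ℝ univ f) (x v : E) :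
    ConvexOn ℝ univ fun t : ℝ => f (x + t • v) := by
  simpa [Function.comp_def, AffineMap.lineMap_apply_module', add_comm]
    using hf.comp_affineMap (AffineMap.lineMap x (x + v))

theorem rightLineDeriv_mul_le (hf : ConvexOn ℝ univ f) (x v : E) {t : ℝ} (ht : 0 < t) :
    rightLineDeriv f x v * t ≤ f (x + t • v) - f x := by
  have h := (hf.comp_line x v).rightDeriv_le_slope_of_mem_interior (by simp) (mem_univ t) ht
  rw [slope_def_field] at h
  simpa [rightLineDeriv, le_div_iff₀ ht] using h

theorem sub_le_leftLineDeriv_mul (hf : ConvexOn ℝ univ f) (x v : E) {t : ℝ} (ht : 0 < t) :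
    f x - f (x - t • v) ≤ leftLineDeriv f x v * t := by
  have h := (hf.comp_line x v).slope_le_leftDeriv_of_mem_interior (mem_univ (-t)) (by simp)
    (neg_neg_of_pos ht)
  rw [slope_def_field] at h
  simpa [leftLineDeriv, div_le_iff₀ ht, sub_eq_add_neg] using h

theorem leftLineDeriv_le_rightLineDeriv (hf : ConvexOn ℝ univ f) (x v : E) :
    leftLineDeriv f x v ≤ rightLineDeriv f x v :=
  (hf.comp_line x v).leftDeriv_le_rightDeriv_of_mem_interior (by simp)

theorem hasDerivAt_line (hf : ConvexOn ℝ univ f) {x v : E}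
    (h : leftLineDeriv f x v = rightLineDeriv f x v) :
    HasDerivAt (fun t : ℝ => f (x + t • v)) (rightLineDeriv f x v) 0 := by
  have hl := (hf.comp_line x v).hasDerivWithinAt_leftDeriv_of_mem_interior (x := 0) (by simp)
  have hr := (hf.comp_line x v).hasDerivWithinAt_rightDeriv_of_mem_interior (x := 0) (by simp)
  rw [← leftLineDeriv, h] at hl
  simpa [Iic_union_Ici] using hl.Iic_of_Iio.union hr.Ici_of_Ioi

theorem two_mul_map_zero_le (hφ : ConvexOn ℝ univ φ) (v : E) :
    2 * φ 0 ≤ φ v + φ (-v) := by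
  have h := hφ.2 (mem_univ v) (mem_univ (-v)) (by norm_num : (0 : ℝ) ≤ 1 / 2)
    (by norm_num : (0 : ℝ) ≤ 1 / 2) (by norm_num)
  rw [show (1 / 2 : ℝ) • v + (1 / 2 : ℝ) • -v = 0 by module, smul_eq_mul, smul_eq_mul] at h
  linarith

/-- Jensen's inequality for `0` and the points `(N * vᵢ) • bᵢ`, all with weight `1 / N`; including
`0` keeps the weights summing to one even for empty `ι`. -/
theorem map_le_sum_basis (hφ : ConvexOn ℝ univ φ) (hφ0 : φ 0 = 0) (b : Module.Basis ι ℝ E)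
    (v : E) :
    φ v ≤ ((Fintype.card ι + 1 : ℕ) : ℝ)⁻¹ *
      ∑ i, φ (((Fintype.card ι + 1 : ℕ) * b.repr v i) • b i) := by
  set N : ℝ := ((Fintype.card ι + 1 : ℕ) : ℝ)
  have hN : N ≠ 0 := by positivity
  let p : Option ι → E := fun o => o.elim 0 fun i => (N * b.repr v i) • b i
  have hv : ∑ o, N⁻¹ • p o = v := by
    conv_rhs => rw [← b.sum_repr v]
    simp only [Fintype.sum_option, p, Option.elim, smul_zero, zero_add, smul_smul]
    refine Finset.sum_congr rfl fun i _ => ?_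
    rw [← mul_assoc, inv_mul_cancel₀ hN, one_mul]
  have hJensen := hφ.map_sum_le (t := Finset.univ) (w := fun _ => N⁻¹) (p := p)
    (fun _ _ => by positivity)
    (by rw [Finset.sum_const, Finset.card_univ, Fintype.card_option, nsmul_eq_mul]
        exact mul_inv_cancel₀ hN)
    (fun _ _ => mem_univ _)
  rw [hv] at hJensen
  simpa [Fintype.sum_option, p, hφ0, Finset.mul_sum] using hJensen

theorem isLittleO_of_isLittleO_lines (hφ : ConvexOn ℝ univ φ) (hφ0 : φ 0 = 0)
    (b : Module.Basis ι ℝ E) (hline : ∀ i, (fun t : ℝ => φ (t • b i)) =o[𝓝 0] fun t => t) :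
    φ =o[𝓝 0] fun v => v := by
  have := b.finiteDimensional_of_finite
  set N : ℝ := ((Fintype.card ι + 1 : ℕ) : ℝ)
  set G : E → ℝ := fun v => N⁻¹ * ∑ i, |φ ((N * b.repr v i) • b i)|
  have hG : G =o[𝓝 0] fun v => v := by
    refine IsLittleO.const_mul_left (IsLittleO.fun_sum fun i _ => IsLittleO.abs_left ?_) _
    let c : E →L[ℝ] ℝ := N • LinearMap.toContinuousLinearMap (b.coord i)
    have hc : ∀ v, c v = N * b.repr v i := fun v => by simp [c]
    simpa [Function.comp_def, hc] using
      ((hline i).comp_tendsto (c.continuous.tendsto' 0 0 (map_zero c))).trans_isBigO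
        (c.isBigO_id _)
  have hGneg : (fun v => G (-v)) =o[𝓝 0] fun v => v :=
    (hG.comp_tendsto (continuous_neg.tendsto' 0 0 neg_zero)).of_neg_right
  have hφG : ∀ v, φ v ≤ G v := fun v =>
    (hφ.map_le_sum_basis hφ0 b v).trans <| mul_le_mul_of_nonneg_left
      (Finset.sum_le_sum fun i _ => le_abs_self _) (by positivity)
  have habs : ∀ v, |φ v| ≤ G v + G (-v) := fun v => by
    have hsymm := hφ.two_mul_map_zero_le v
    rw [hφ0, mul_zero] at hsymm
    have hGv : 0 ≤ G v := by positivity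
    have hGv' : 0 ≤ G (-v) := by positivity
    exact abs_le.2 ⟨by linarith [hφG (-v)], by linarith [hφG v]⟩
  refine IsBigO.trans_isLittleO ?_ (hG.add hGneg)
  exact IsBigO.of_bound' (Eventually.of_forall fun v => (habs v).trans (le_abs_self _))

theorem differentiableAt_of_differentiableAt_lines (hf : ConvexOn ℝ univ f)
    (b : Module.Basis ι ℝ E) {x : E}
    (h : ∀ i, DifferentiableAt ℝ (fun t : ℝ => f (x + t • b i)) 0) :
    DifferentiableAt ℝ f x := by
  have := b.finiteDimensional_of_finite
  let L : E →L[ℝ] ℝ :=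
    LinearMap.toContinuousLinearMap (b.constr ℝ fun i => deriv (fun t : ℝ => f (x + t • b i)) 0)
  let φ : E → ℝ := fun v => f (x + v) - f x - L v
  have hφ : ConvexOn ℝ univ φ := by
    refine (((hf.translate_right x).sub (L.toLinearMap.concaveOn convex_univ)).add_const
      (-f x)).congr fun v _ => ?_
    simp only [φ, Pi.add_apply, Pi.sub_apply, Function.comp_apply, ContinuousLinearMap.coe_coe]
    ring
  have hline : ∀ i, (fun t : ℝ => φ (t • b i)) =o[𝓝 0] fun t => t := fun i => by
    have hL : ∀ t : ℝ, L (t • b i) = t * deriv (fun t : ℝ => f (x + t • b i)) 0 := fun t => by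
      simp only [L, map_smul, LinearMap.coe_toContinuousLinearMap', Module.Basis.constr_basis,
        smul_eq_mul]
    simpa [φ, hL, hasDerivAt_iff_isLittleO] using (h i).hasDerivAt
  exact (hasFDerivAt_iff_isLittleO_nhds_zero.2
    (hφ.isLittleO_of_isLittleO_lines (by simp [φ]) b hline)).differentiableAt

theorem exists_leftLineDeriv_lt_of_not_differentiableAt (hf : ConvexOn ℝ univ f)
    (b : Module.Basis ι ℝ E) {x : E}
    (hx : ¬ DifferentiableAt ℝ f x) :
    ∃ i, leftLineDeriv f x (b i) < rightLineDeriv f x (b i) := by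
  by_contra! h
  refine hx <| hf.differentiableAt_of_differentiableAt_lines b fun i => ?_
  exact (hf.hasDerivAt_line ((hf.leftLineDeriv_le_rightLineDeriv x (b i)).antisymm (h i)))
    |>.differentiableAt

theorem exists_lipschitzOnWith_closedBall [FiniteDimensional ℝ E] (hf : ConvexOn ℝ univ f)
    (x₀ : E) (r : ℝ) :
    ∃ K, LipschitzOnWith K f (closedBall x₀ r) := by
  have hbdd : Bornology.IsBounded (f '' ball x₀ (r + 2)) :=
    ((isCompact_closedBall x₀ (r + 2)).image_of_continuousOn
      ((hf.continuousOn isOpen_univ).mono (subset_univ _))).isBounded.subset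
      (image_mono ball_subset_closedBall)
  obtain ⟨K, hK⟩ := ConvexOn.exists_lipschitzOnWith_of_isBounded
    (hf.subset (subset_univ _) (convex_ball x₀ (r + 2))) (by linarith : r + 1 < r + 2) hbdd
  exact ⟨K, hK.mono (closedBall_subset_ball (lt_add_one r))⟩

theorem sub_mul_le_of_lipschitzOnWith (hf : ConvexOn ℝ univ f) {K : ℝ≥0} {t : Set E}
    (hK : LipschitzOnWith K f t) {x y v : E} {δ : ℝ} (hδ : 0 < δ) (hx : x ∈ t) (hy : y ∈ t)
    (hxδ : x - δ • v ∈ t) (hyδ : y + δ • v ∈ t) :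
    (rightLineDeriv f y v - leftLineDeriv f x v) * δ ≤ 2 * K * ‖x - y - δ • v‖ := by
  have hright := hf.rightLineDeriv_mul_le y v hδ
  have hleft := hf.sub_le_leftLineDeriv_mul x v hδ
  have hyx : f (y + δ • v) - f x ≤ K * ‖x - y - δ • v‖ := by
    have h := hK.dist_le_mul _ hyδ _ hx
    rw [Real.dist_eq, dist_eq_norm, show y + δ • v - x = -(x - y - δ • v) by abel,
      norm_neg] at h
    exact (le_abs_self _).trans h
  have hxy : f (x - δ • v) - f y ≤ K * ‖x - y - δ • v‖ := by
    have h := hK.dist_le_mul _ hxδ _ hy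
    rw [Real.dist_eq, dist_eq_norm, show x - δ • v - y = x - y - δ • v by abel] at h
    exact (le_abs_self _).trans h
  rw [sub_mul]
  linarith

theorem apply_sub_le_mul_norm_sub_smul (hf : ConvexOn ℝ univ f) {ℓ : E →L[ℝ] ℝ} {v : E}
    {a b R : ℝ} {K : ℝ≥0} (hab : a < b)
    (hK : LipschitzOnWith K f (closedBall 0 (R + ‖ℓ‖ * (2 * R) * ‖v‖))) {x y : E}
    (hxR : ‖x‖ ≤ R) (hyR : ‖y‖ ≤ R) (hxa : leftLineDeriv f x v ≤ a)
    (hyb : b ≤ rightLineDeriv f y v) :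
    ℓ (x - y) ≤ 2 * K / (b - a) * ‖x - y - ℓ (x - y) • v‖ := by
  set δ := ℓ (x - y)
  rcases le_or_gt δ 0 with hδ | hδ
  · exact hδ.trans (by have := (sub_pos.2 hab).le; positivity)
  have hδv : ‖δ • v‖ ≤ ‖ℓ‖ * (2 * R) * ‖v‖ := by
    rw [norm_smul]
    gcongr
    exact (ℓ.le_opNorm _).trans (by gcongr; exact (norm_sub_le x y).trans (by linarith))
  have hmem : ∀ z : E, ‖z‖ ≤ R + ‖ℓ‖ * (2 * R) * ‖v‖ →
      z ∈ closedBall (0 : E) (R + ‖ℓ‖ * (2 * R) * ‖v‖) := fun z hz => by simpa using hz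
  have h := hf.sub_mul_le_of_lipschitzOnWith hK hδ
    (hmem x (by linarith [norm_nonneg (δ • v)])) (hmem y (by linarith [norm_nonneg (δ • v)]))
    (hmem _ ((norm_sub_le _ _).trans (by linarith)))
    (hmem _ ((norm_add_le _ _).trans (by linarith)))
  have hgap : (b - a) * δ ≤ (rightLineDeriv f y v - leftLineDeriv f x v) * δ :=
    mul_le_mul_of_nonneg_right (by linarith) hδ.le
  rw [div_mul_eq_mul_div, le_div_iff₀ (sub_pos.2 hab)]
  linarith

theorem exists_norm_sub_le_mul_norm_sub_smul [FiniteDimensional ℝ E] (hf : ConvexOn ℝ univ f)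
    {ℓ : E →L[ℝ] ℝ} {v : E} {a b : ℝ} (hab : a < b) {s : Set E} (hs : Bornology.IsBounded s)
    (hjump : ∀ x ∈ s, leftLineDeriv f x v ≤ a ∧ b ≤ rightLineDeriv f x v) :
    ∃ C : ℝ≥0, ∀ x ∈ s, ∀ y ∈ s, ‖x - y‖ ≤ C * ‖x - y - ℓ (x - y) • v‖ := by
  obtain ⟨R, hR⟩ := hs.subset_closedBall 0
  obtain ⟨K, hK⟩ := hf.exists_lipschitzOnWith_closedBall 0 (R + ‖ℓ‖ * (2 * R) * ‖v‖)
  set C : ℝ := 2 * K / (b - a)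
  have habs : ∀ x ∈ s, ∀ y ∈ s, |ℓ (x - y)| ≤ C * ‖x - y - ℓ (x - y) • v‖ := by
    intro x hx y hy
    have hxR : ‖x‖ ≤ R := by simpa using hR hx
    have hyR : ‖y‖ ≤ R := by simpa using hR hy
    refine abs_le.2 ⟨?_, hf.apply_sub_le_mul_norm_sub_smul hab hK hxR hyR (hjump x hx).1
      (hjump y hy).2⟩
    have h := hf.apply_sub_le_mul_norm_sub_smul hab hK hyR hxR (hjump y hy).1 (hjump x hx).2
    rw [show y - x - ℓ (y - x) • v = -(x - y - ℓ (x - y) • v) by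
        rw [← neg_sub x y, map_neg]; module,
      norm_neg, ← neg_sub x y, map_neg] at h
    linarith
  have hC : 0 ≤ C := div_nonneg (by positivity) (sub_pos.2 hab).le
  refine ⟨⟨1 + C * ‖v‖, by positivity⟩, fun x hx y hy => ?_⟩
  calc ‖x - y‖ = ‖(x - y - ℓ (x - y) • v) + ℓ (x - y) • v‖ := by rw [sub_add_cancel]
    _ ≤ ‖x - y - ℓ (x - y) • v‖ + |ℓ (x - y)| * ‖v‖ := by
        rw [← Real.norm_eq_abs, ← norm_smul]; exact norm_add_le _ _
    _ ≤ ‖x - y - ℓ (x - y) • v‖ + C * ‖x - y - ℓ (x - y) • v‖ * ‖v‖ := by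
        gcongr; exact habs x hx y hy
    _ = (1 + C * ‖v‖) * ‖x - y - ℓ (x - y) • v‖ := by ring

theorem hausdorffMeasure_lt_top_of_jump [FiniteDimensional ℝ E] [MeasurableSpace E]
    [BorelSpace E] (hf : ConvexOn ℝ univ f) {v : E} (hv : v ≠ 0) {a b : ℝ}
    (hab : a < b) {s : Set E} (hs : Bornology.IsBounded s)
    (hjump : ∀ x ∈ s, leftLineDeriv f x v ≤ a ∧ b ≤ rightLineDeriv f x v) :
    μH[(Module.finrank ℝ E : ℝ) - 1] s < ∞ := by
  obtain ⟨ℓ, hℓ⟩ := SeparatingDual.exists_eq_one (R := ℝ) hv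
  obtain ⟨C, hC⟩ := hf.exists_norm_sub_le_mul_norm_sub_smul (ℓ := ℓ) hab hs hjump
  let P : E →L[ℝ] E := ContinuousLinearMap.id ℝ E - ℓ.smulRight v
  have hP : ∀ z, P z = z - ℓ z • v := fun z => rfl
  have hPker : P '' s ⊆ LinearMap.ker (ℓ : E →ₗ[ℝ] ℝ) := by
    rintro _ ⟨z, -, rfl⟩
    simp [hP, hℓ]
  have hdim : (Module.finrank ℝ (LinearMap.ker (ℓ : E →ₗ[ℝ] ℝ)) : ℝ) =
      Module.finrank ℝ E - 1 := by
    have hℓ0 : (ℓ : E →ₗ[ℝ] ℝ) ≠ 0 := fun h => by simpa [hℓ] using LinearMap.congr_fun h v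
    rw [eq_sub_iff_add_eq]
    exact_mod_cast Module.Dual.finrank_ker_add_one_of_ne_zero hℓ0
  have hanti : AntilipschitzWith C (s.domRestrict P) :=
    AntilipschitzWith.of_le_mul_dist fun x y => by
      have h := hC x x.2 y y.2
      rwa [map_sub, sub_smul, show (x - y : E) - (ℓ x • v - ℓ y • v) = P x - P y by
        rw [hP, hP]; abel, ← dist_eq_norm, ← dist_eq_norm] at h
  rw [← hdim]
  calc μH[_] s ≤ (C : ℝ≥0∞) ^ _ * μH[_] (P '' s) :=
        le_hausdorffMeasure_image_of_antilipschitzWith_domRestrict (Nat.cast_nonneg _) hanti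
    _ < ∞ := ENNReal.mul_lt_top (by simp)
        (Submodule.hausdorffMeasure_lt_top_of_isBounded _ hPker (P.lipschitz.isBounded_image hs))

theorem exists_cover_nondifferentiable [FiniteDimensional ℝ E] [MeasurableSpace E]
    [BorelSpace E] (hf : ConvexOn ℝ univ f) :
    ∃ B : ℕ → Set E, (∀ k, MeasurableSet (B k) ∧ μH[(Module.finrank ℝ E : ℝ) - 1] (B k) < ∞) ∧
      {x | ¬ DifferentiableAt ℝ f x} ⊆ ⋃ k, B k := by
  let b := Module.finBasis ℝ E
  let jumpSet : Fin (Module.finrank ℝ E) × ℚ × ℚ × ℕ → Set E := fun ⟨i, p, q, R⟩ =>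
    closedBall 0 R ∩ {x | leftLineDeriv f x (b i) ≤ p ∧ q ≤ rightLineDeriv f x (b i)}
  refine exists_measurable_cover_of_countable _ (S := jumpSet '' {j | j.2.1 < j.2.2.1})
    ((to_countable _).image _) ?_ ?_
  · rintro _ ⟨⟨i, p, q, R⟩, hpq, rfl⟩
    exact hf.hausdorffMeasure_lt_top_of_jump (b.ne_zero i) (Rat.cast_lt.2 hpq)
      (isBounded_closedBall.subset inter_subset_left) fun x hx => hx.2
  · intro x hx
    obtain ⟨i, hi⟩ := hf.exists_leftLineDeriv_lt_of_not_differentiableAt b hx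
    obtain ⟨p, hp, hpi⟩ := exists_rat_btwn hi
    obtain ⟨q, hpq, hq⟩ := exists_rat_btwn hpi
    exact ⟨_, ⟨⟨i, p, q, ⌈‖x‖⌉₊⟩, by exact_mod_cast hpq, rfl⟩,
      by simpa using Nat.le_ceil ‖x‖, hp.le, hq.le⟩

end ConvexOn

end

/-- **σ-finiteness of the non-differentiability set of a convex function.**
The set where a convex function `f : ℝⁿ → ℝ` fails to be differentiable can be
covered by countably many Borel sets of finite `ℋ^{n−1}` measure. -/
theorem nondifferentiability_set_of_convex_sigma_finite (n : ℕ)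
    (f : EuclideanSpace ℝ (Fin n) → ℝ) (hf : ConvexOn ℝ Set.univ f) :
    ∃ B : ℕ → Set (EuclideanSpace ℝ (Fin n)),
      (∀ i, MeasurableSet (B i) ∧ μH[(n : ℝ) - 1] (B i) < ⊤) ∧
      {x | ¬ DifferentiableAt ℝ f x} ⊆ ⋃ i, B i := by
  simpa [finrank_euclideanSpace_fin] using hf.exists_cover_nondifferentiable
end

section
/- Let μ and ν be Borel probability measures on ℝ with finite first moments, assume μ has no atoms, and let T : ℝ → ℝ be the monotone nondecreasing rearrangement map defined by T(x) = inf { y ∈ ℝ : ν((−∞, y]) ≥ μ((−∞, x]) }. Then T_#μ = ν, and for every convex function h : ℝ → [0, +∞), T minimizes ∫ h(ψ(x) − x) dμ(x) among all Borel maps ψ : ℝ → ℝ with ψ_#μ = ν. -/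
open MeasureTheory ProbabilityTheory Set Filter Topology
open scoped ENNReal

/-!
Write `F`, `G` for the distribution functions of `μ`, `ν`, so that `T = G⁻¹ ∘ F`. As `μ` has no
atoms, `F` pushes `μ` to the uniform law on `[0, 1]`, which `G⁻¹` pushes to `ν`; moreover
`μ {x ≤ s, T x ≤ z} = min (F s) (G z)`, the largest value `μ {x ≤ s, ψ x ≤ z}` can take for a
transport map `ψ`. Integrating `μ {x + a ≤ z < ψ x} = F (z - a) - μ {x + a ≤ z, ψ x ≤ z}` over
`z` gives `∫ (ψ x - x - a)⁺ dμ`, and similarly for `(a - (ψ x - x))⁺`, so `T` minimises every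
such hockey-stick cost. Up to an affine function, which integrates to the same value for every
transport map because the first moments are finite, a convex `h` is a mixture of hockey sticks
against the measure `h''`.
-/

lemma Real.volume_restrict_Icc_Iic (a b c : ℝ) :
    volume.restrict (Icc a b) (Iic c) = ENNReal.ofReal (min c b - a) := by
  rw [Measure.restrict_apply measurableSet_Iic, inter_comm, ← Ici_inter_Iic, inter_assoc,
    Iic_inter_Iic, Ici_inter_Iic, Real.volume_Icc, min_comm]

/-- Only meaningful for `p ∈ (0, 1)`: otherwise the set may be empty or unbounded below, and
`sInf` returns `0`. -/
noncomputable def quantile (G : ℝ → ℝ) (p : ℝ) : ℝ := sInf {y | p ≤ G y}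

namespace StieltjesFunction

variable {G : StieltjesFunction ℝ} (hG0 : Tendsto G atBot (𝓝 0)) (hG1 : Tendsto G atTop (𝓝 1))
include hG0 hG1

lemma quantile_le_iff {p : ℝ} (hp : p ∈ Ioo 0 1) (y : ℝ) : quantile G p ≤ y ↔ p ≤ G y := by
  have hne : {y | p ≤ G y}.Nonempty :=
    ((hG1.eventually (lt_mem_nhds hp.2)).exists).imp fun _ => le_of_lt
  have hbdd : BddBelow {y | p ≤ G y} := by
    obtain ⟨b, hb⟩ := eventually_atBot.1 (hG0.eventually (gt_mem_nhds hp.1))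
    exact ⟨b, fun y hy => le_of_not_gt fun hyb => (hb y hyb.le).not_ge hy⟩
  refine ⟨fun h => ?_, fun h => csInf_le hbdd h⟩
  suffices p ≤ G (quantile G p) from this.trans (G.mono h)
  refine ge_of_tendsto ((G.right_continuous _).mono Ioi_subset_Ici_self) ?_
  filter_upwards [self_mem_nhdsWithin] with z hz
  obtain ⟨w, hw, hwz⟩ := exists_lt_of_csInf_lt hne hz
  exact hw.trans (G.mono hwz.le)

lemma monotoneOn_quantile : MonotoneOn (quantile G) (Ioo 0 1) := fun _ hp _ hq hpq =>
  (quantile_le_iff hG0 hG1 hp _).2 (hpq.trans ((quantile_le_iff hG0 hG1 hq _).1 le_rfl))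

lemma quantile_of_notMem_Ioc {p : ℝ} (hp : p ∉ Ioc 0 1) : quantile G p = 0 := by
  rcases le_or_gt p 0 with hp0 | hp0
  · have : {y | p ≤ G y} = univ :=
      eq_univ_of_forall fun y => hp0.trans (G.mono.le_of_tendsto hG0 y)
    rw [quantile, this, Real.sInf_univ]
  · have : {y | p ≤ G y} = ∅ := eq_empty_of_forall_notMem fun y (hy : p ≤ G y) =>
      hp ⟨hp0, hy.trans (G.mono.ge_of_tendsto hG1 y)⟩
    rw [quantile, this, Real.sInf_empty]

lemma measurable_quantile : Measurable (quantile G) := by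
  refine measurable_of_restrict_of_restrict_compl measurableSet_Ioo
    (Monotone.measurable fun p q hpq => monotoneOn_quantile hG0 hG1 p.2 q.2 hpq) ?_
  have : (Ioo 0 1)ᶜ.domRestrict (quantile G) =
      fun p : ↥(Ioo (0 : ℝ) 1)ᶜ => if (p : ℝ) = 1 then quantile G 1 else 0 := by
    funext ⟨p, hp⟩
    split_ifs with h
    · exact congrArg _ h
    · exact quantile_of_notMem_Ioc hG0 hG1 fun hp' => hp ⟨hp'.1, lt_of_le_of_ne hp'.2 h⟩
  rw [this]
  exact Measurable.ite (measurable_subtype_coe (measurableSet_singleton 1)) measurable_const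
    measurable_const

lemma map_quantile : (volume.restrict (Icc 0 1)).map (quantile G) = G.measure := by
  refine Measure.ext_of_Iic _ _ fun y => ?_
  have hG : 0 ≤ G y ∧ G y ≤ 1 := ⟨G.mono.le_of_tendsto hG0 y, G.mono.ge_of_tendsto hG1 y⟩
  rw [Measure.map_apply (measurable_quantile hG0 hG1) measurableSet_Iic,
    G.measure_Iic hG0, sub_zero, ← Measure.restrict_congr_set Ioo_ae_eq_Icc,
    Measure.restrict_apply' measurableSet_Ioo]
  have : quantile G ⁻¹' Iic y ∩ Ioo 0 1 = Iic (G y) ∩ Ioo 0 1 := by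
    ext p
    simp only [mem_inter_iff, mem_preimage, mem_Iic]
    exact and_congr_left (quantile_le_iff hG0 hG1 · y)
  rw [this, ← Measure.restrict_apply' measurableSet_Ioo, Measure.restrict_congr_set Ioo_ae_eq_Icc,
    Real.volume_restrict_Icc_Iic, sub_zero, min_eq_left hG.2]

end StieltjesFunction

namespace ProbabilityTheory

variable {μ : Measure ℝ} [IsProbabilityMeasure μ]

lemma continuous_cdf [NullSingletonClass μ] : Continuous (cdf μ) := by
  refine continuous_iff_continuousAt.2 fun x => ?_
  rw [(monotone_cdf μ).continuousAt_iff_leftLim_eq_rightLim, StieltjesFunction.rightLim_eq]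
  have h := (cdf μ).measure_singleton x
  rw [measure_cdf, measure_singleton, eq_comm, ENNReal.ofReal_eq_zero, sub_nonpos] at h
  exact le_antisymm ((monotone_cdf μ).leftLim_le le_rfl) h

lemma measure_cdf_le [NullSingletonClass μ] (c : ℝ) :
    μ {x | cdf μ x ≤ c} = ENNReal.ofReal (min c 1) := by
  rcases le_or_gt 1 c with hc | hc
  · rw [min_eq_right hc, ENNReal.ofReal_one, ← measure_univ (μ := μ)]
    exact congrArg μ (eq_univ_of_forall fun x => (cdf_le_one μ x).trans hc)
  rw [min_eq_left hc.le]
  set S := {x | cdf μ x ≤ c}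
  rcases S.eq_empty_or_nonempty with hS | hS
  · have hc0 : c ≤ 0 := ge_of_tendsto' (tendsto_cdf_atBot μ) fun x =>
      (not_le.1 fun hx => hS.subset hx).le
    rw [hS, measure_empty, ENNReal.ofReal_of_nonpos hc0]
  have hbdd : BddAbove S := by
    obtain ⟨b, hb⟩ := eventually_atTop.1 ((tendsto_cdf_atTop μ).eventually (lt_mem_nhds hc))
    exact ⟨b, fun x hx => ((monotone_cdf μ).reflect_lt (lt_of_le_of_lt hx (hb b le_rfl))).le⟩
  have hmem : sSup S ∈ S := (isClosed_le continuous_cdf continuous_const).csSup_mem hS hbdd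
  have hSIic : S = Iic (sSup S) :=
    Subset.antisymm (fun x hx => le_csSup hbdd hx) fun x hx => (monotone_cdf μ hx).trans hmem
  have hcdf : cdf μ (sSup S) = c := by
    refine le_antisymm hmem (not_lt.1 fun hlt => ?_)
    obtain ⟨y, hy, hyS⟩ :=
      (continuous_cdf.continuousAt.eventually (gt_mem_nhds hlt)).exists_gt
    exact (le_csSup hbdd (show y ∈ S from hyS.le)).not_gt hy
  rw [hSIic, ← ofReal_cdf, hcdf]

lemma map_cdf [NullSingletonClass μ] : μ.map (cdf μ) = volume.restrict (Icc 0 1) := by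
  refine Measure.ext_of_Iic _ _ fun c => ?_
  rw [Measure.map_apply (monotone_cdf μ).measurable measurableSet_Iic,
    Real.volume_restrict_Icc_Iic, sub_zero]
  exact measure_cdf_le c

lemma ae_cdf_mem_Ioo [NullSingletonClass μ] : ∀ᵐ x ∂μ, cdf μ x ∈ Ioo 0 1 := by
  refine ae_of_ae_map (monotone_cdf μ).measurable.aemeasurable ?_
  rw [map_cdf, ← Measure.restrict_congr_set Ioo_ae_eq_Icc]
  exact ae_restrict_mem measurableSet_Ioo

end ProbabilityTheory

namespace MeasureTheory

variable {α : Type*} [MeasurableSpace α] {μ : Measure α} {f g g₁ g₂ : α → ℝ}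

lemma lintegral_ofReal_sub_eq_lintegral_measure [SFinite μ] (hf : Measurable f)
    (hg : Measurable g) :
    ∫⁻ x, ENNReal.ofReal (g x - f x) ∂μ = ∫⁻ z, μ {x | f x ≤ z ∧ z < g x} := by
  have hR : MeasurableSet {p : α × ℝ | f p.1 ≤ p.2 ∧ p.2 < g p.1} :=
    (measurableSet_le (hf.comp measurable_fst) measurable_snd).inter
      (measurableSet_lt measurable_snd (hg.comp measurable_fst))
  calc ∫⁻ x, ENNReal.ofReal (g x - f x) ∂μ = ∫⁻ x, volume (Ico (f x) (g x)) ∂μ := by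
        simp_rw [Real.volume_Ico]
    _ = (μ.prod volume) {p : α × ℝ | f p.1 ≤ p.2 ∧ p.2 < g p.1} := (Measure.prod_apply hR).symm
    _ = ∫⁻ z, μ {x | f x ≤ z ∧ z < g x} := Measure.prod_apply_symm hR

lemma measure_le_lt_eq_sub [IsFiniteMeasure μ] (hg : Measurable g) (z : ℝ) :
    μ {x | f x ≤ z ∧ z < g x} = μ {x | f x ≤ z} - μ ({x | f x ≤ z} ∩ {x | g x ≤ z}) := by
  refine ENNReal.eq_sub_of_add_eq (measure_ne_top μ _) ?_
  have hdiff : {x | f x ≤ z ∧ z < g x} = {x | f x ≤ z} \ {x | g x ≤ z} := by ext; simp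
  rw [hdiff]
  exact measure_sdiff_add_inter _ (measurableSet_le hg measurable_const)

lemma lintegral_ofReal_sub_le_of_measure_inter_le [IsFiniteMeasure μ] (hf : Measurable f)
    (hg₁ : Measurable g₁) (hg₂ : Measurable g₂)
    (h : ∀ z, μ ({x | f x ≤ z} ∩ {x | g₂ x ≤ z}) ≤ μ ({x | f x ≤ z} ∩ {x | g₁ x ≤ z})) :
    ∫⁻ x, ENNReal.ofReal (g₁ x - f x) ∂μ ≤ ∫⁻ x, ENNReal.ofReal (g₂ x - f x) ∂μ := by
  simp_rw [lintegral_ofReal_sub_eq_lintegral_measure hf hg₁,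
    lintegral_ofReal_sub_eq_lintegral_measure hf hg₂, measure_le_lt_eq_sub hg₁,
    measure_le_lt_eq_sub hg₂]
  exact lintegral_mono fun z => tsub_le_tsub_left (h z) _

lemma lintegral_ofReal_sub_le_of_measure_inter_le_of_measure_eq [IsFiniteMeasure μ]
    (hf : Measurable f) (hg₁ : Measurable g₁) (hg₂ : Measurable g₂)
    (h : ∀ z, μ ({x | f x ≤ z} ∩ {x | g₂ x ≤ z}) ≤ μ ({x | f x ≤ z} ∩ {x | g₁ x ≤ z}))
    (hg : ∀ z, μ {x | g₁ x ≤ z} = μ {x | g₂ x ≤ z}) :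
    ∫⁻ x, ENNReal.ofReal (f x - g₁ x) ∂μ ≤ ∫⁻ x, ENNReal.ofReal (f x - g₂ x) ∂μ := by
  simp_rw [lintegral_ofReal_sub_eq_lintegral_measure hg₁ hf,
    lintegral_ofReal_sub_eq_lintegral_measure hg₂ hf, measure_le_lt_eq_sub hf,
    inter_comm _ {x | f x ≤ _}, hg]
  exact lintegral_mono fun z => tsub_le_tsub_left (h z) _

lemma lintegral_ofReal_le_of_lintegral_ofReal_sub_le {u₁ u₂ ℓ₁ ℓ₂ : α → ℝ}
    (hu₁ : Measurable u₁) (hu₂ : Measurable u₂) (hu₁0 : ∀ x, 0 ≤ u₁ x) (hu₂0 : ∀ x, 0 ≤ u₂ x)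
    (hℓ₁ : Integrable ℓ₁ μ) (hℓ₂ : Integrable ℓ₂ μ) (hℓ₁u : ∀ x, ℓ₁ x ≤ u₁ x)
    (hℓ₂u : ∀ x, ℓ₂ x ≤ u₂ x) (hℓ : ∫ x, ℓ₁ x ∂μ = ∫ x, ℓ₂ x ∂μ)
    (h : ∫⁻ x, ENNReal.ofReal (u₁ x - ℓ₁ x) ∂μ ≤ ∫⁻ x, ENNReal.ofReal (u₂ x - ℓ₂ x) ∂μ) :
    ∫⁻ x, ENNReal.ofReal (u₁ x) ∂μ ≤ ∫⁻ x, ENNReal.ofReal (u₂ x) ∂μ := by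
  by_cases htop : ∫⁻ x, ENNReal.ofReal (u₂ x) ∂μ = ∞
  · exact htop ▸ le_top
  have hu₂i : Integrable u₂ μ := (lintegral_ofReal_ne_top_iff_integrable
    hu₂.aestronglyMeasurable (ae_of_all _ hu₂0)).1 htop
  have hr₂i : Integrable (fun x => u₂ x - ℓ₂ x) μ := hu₂i.sub hℓ₂
  have hr₁i : Integrable (fun x => u₁ x - ℓ₁ x) μ := by
    refine (lintegral_ofReal_ne_top_iff_integrable (hu₁.aestronglyMeasurable.sub hℓ₁.1)
      (ae_of_all _ fun x => sub_nonneg.2 (hℓ₁u x))).1 (ne_top_of_le_ne_top ?_ h)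
    exact (lintegral_ofReal_ne_top_iff_integrable hr₂i.1
      (ae_of_all _ fun x => sub_nonneg.2 (hℓ₂u x))).2 hr₂i
  have hu₁i : Integrable u₁ μ :=
    (hr₁i.add hℓ₁).congr (ae_of_all _ fun x => sub_add_cancel (u₁ x) (ℓ₁ x))
  rw [← ofReal_integral_eq_lintegral_ofReal hr₁i (ae_of_all _ fun x => sub_nonneg.2 (hℓ₁u x)),
    ← ofReal_integral_eq_lintegral_ofReal hr₂i (ae_of_all _ fun x => sub_nonneg.2 (hℓ₂u x)),
    ENNReal.ofReal_le_ofReal_iff (integral_nonneg fun x => sub_nonneg.2 (hℓ₂u x)),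
    integral_sub hu₁i hℓ₁, integral_sub hu₂i hℓ₂, hℓ, sub_le_sub_iff_right] at h
  rw [← ofReal_integral_eq_lintegral_ofReal hu₁i (ae_of_all _ hu₁0),
    ← ofReal_integral_eq_lintegral_ofReal hu₂i (ae_of_all _ hu₂0)]
  exact ENNReal.ofReal_le_ofReal h

end MeasureTheory

namespace ConvexOn

variable {f : ℝ → ℝ} (hf : ConvexOn ℝ univ f)
include hf

protected lemma continuous : Continuous f :=
  continuousOn_univ.1 (hf.continuousOn isOpen_univ)

lemma hasDerivWithinAt_rightDeriv (x : ℝ) :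
    HasDerivWithinAt f (derivWithin f (Ioi x) x) (Ioi x) x :=
  hf.hasDerivWithinAt_rightDeriv_of_mem_interior (by simp)

lemma monotone_rightDeriv : Monotone fun x => derivWithin f (Ioi x) x :=
  monotoneOn_univ.1 (by simpa using hf.monotoneOn_rightDeriv)

lemma rightDeriv_le_slope_of_lt {x y : ℝ} (hxy : x < y) :
    derivWithin f (Ioi x) x ≤ slope f x y :=
  hf.rightDeriv_le_slope_of_mem_interior (by simp) (mem_univ y) hxy

lemma continuousWithinAt_rightDeriv (x : ℝ) :
    ContinuousWithinAt (fun x => derivWithin f (Ioi x) x) (Ici x) x := by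
  rw [← continuousWithinAt_Ioi_iff_Ici,
    hf.monotone_rightDeriv.continuousWithinAt_Ioi_iff_rightLim_eq]
  refine le_antisymm ?_ (hf.monotone_rightDeriv.le_rightLim le_rfl)
  refine ge_of_tendsto ((hasDerivWithinAt_iff_tendsto_slope' self_notMem_Ioi).1
    (hf.hasDerivWithinAt_rightDeriv x)) ?_
  filter_upwards [self_mem_nhdsWithin] with u (hu : x < u)
  have hcont : ContinuousAt (fun w => slope f w u) x := by
    simp_rw [slope_def_field]
    exact (continuousAt_const.sub hf.continuous.continuousAt).div
      (continuousAt_const.sub continuousAt_id) (sub_ne_zero.2 hu.ne')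
  refine le_of_tendsto_of_tendsto (hf.monotone_rightDeriv.tendsto_rightLim x)
    (hcont.tendsto.mono_left nhdsWithin_le_nhds) ?_
  filter_upwards [Ioo_mem_nhdsGT hu] with w hw using hf.rightDeriv_le_slope_of_lt hw.2

/-- Its measure is the second derivative of `f` in the sense of distributions. -/
noncomputable def rightDerivStieltjes : StieltjesFunction ℝ where
  toFun x := derivWithin f (Ioi x) x
  mono' := hf.monotone_rightDeriv
  right_continuous' := hf.continuousWithinAt_rightDeriv

lemma add_rightDeriv_zero_mul_le (t : ℝ) : f 0 + derivWithin f (Ioi 0) 0 * t ≤ f t := by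
  rcases lt_trichotomy t 0 with ht | rfl | ht
  · have h := (hf.slope_le_leftDeriv_of_mem_interior (mem_univ t) (by simp) ht).trans
      (hf.leftDeriv_le_rightDeriv_of_mem_interior (by simp))
    rw [slope_def_field, div_le_iff₀ (by linarith)] at h
    linarith
  · simp
  · have h := hf.rightDeriv_le_slope_of_lt ht
    rw [slope_def_field, le_div_iff₀ (by linarith)] at h
    linarith

lemma integral_Ioc_rightDeriv {a b : ℝ} (hab : a ≤ b) :
    ∫ z in Ioc a b, derivWithin f (Ioi z) z = f b - f a := by
  rw [← intervalIntegral.integral_of_le hab]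
  exact intervalIntegral.integral_eq_sub_of_hasDeriv_right_of_le hab
    hf.continuous.continuousOn (fun x _ => hf.hasDerivWithinAt_rightDeriv x)
    hf.monotone_rightDeriv.intervalIntegrable

lemma lintegral_Ioi_ofReal_sub (t : ℝ) :
    ∫⁻ a in Ioi 0, ENNReal.ofReal (t - a) ∂hf.rightDerivStieltjes.measure =
      ∫⁻ z in Ioo 0 t, ENNReal.ofReal (derivWithin f (Ioi z) z - derivWithin f (Ioi 0) 0) := by
  have h := lintegral_ofReal_sub_eq_lintegral_measure
    (μ := hf.rightDerivStieltjes.measure.restrict (Ioi 0)) measurable_id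
    (measurable_const (a := t))
  simp only [id] at h
  rw [h, ← lintegral_indicator measurableSet_Ioo]
  refine lintegral_congr fun z => ?_
  by_cases hz : z < t
  · have : {a : ℝ | a ≤ z ∧ z < t} ∩ Ioi 0 = Ioc 0 z := by ext; simp [hz, and_comm]
    rw [Measure.restrict_apply' measurableSet_Ioi, this, StieltjesFunction.measure_Ioc]
    by_cases h0 : 0 < z
    · rw [indicator_of_mem (show z ∈ Ioo 0 t from ⟨h0, hz⟩)]; rfl
    · rw [indicator_of_notMem fun h => h0 h.1, ENNReal.ofReal_of_nonpos
        (sub_nonpos.2 (hf.rightDerivStieltjes.mono (not_lt.1 h0)))]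
  · simp [hz]

lemma lintegral_Iic_ofReal_sub (t : ℝ) :
    ∫⁻ a in Iic 0, ENNReal.ofReal (a - t) ∂hf.rightDerivStieltjes.measure =
      ∫⁻ z in Ico t 0, ENNReal.ofReal (derivWithin f (Ioi 0) 0 - derivWithin f (Ioi z) z) := by
  have h := lintegral_ofReal_sub_eq_lintegral_measure
    (μ := hf.rightDerivStieltjes.measure.restrict (Iic 0)) (measurable_const (a := t))
    measurable_id
  simp only [id] at h
  rw [h, ← lintegral_indicator measurableSet_Ico]
  refine lintegral_congr fun z => ?_
  by_cases hz : t ≤ z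
  · have : {a : ℝ | t ≤ z ∧ z < a} ∩ Iic 0 = Ioc z 0 := by ext; simp [hz]
    rw [Measure.restrict_apply' measurableSet_Iic, this, StieltjesFunction.measure_Ioc]
    by_cases h0 : z < 0
    · rw [indicator_of_mem (show z ∈ Ico t 0 from ⟨hz, h0⟩)]; rfl
    · rw [indicator_of_notMem fun h => h0 h.2, ENNReal.ofReal_of_nonpos
        (sub_nonpos.2 (hf.rightDerivStieltjes.mono (not_lt.1 h0)))]
  · simp [hz]

lemma ofReal_sub_affine_eq_lintegral (t : ℝ) :
    ENNReal.ofReal (f t - (f 0 + derivWithin f (Ioi 0) 0 * t)) =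
      ∫⁻ a in Ioi 0, ENNReal.ofReal (t - a) ∂hf.rightDerivStieltjes.measure +
        ∫⁻ a in Iic 0, ENNReal.ofReal (a - t) ∂hf.rightDerivStieltjes.measure := by
  rw [hf.lintegral_Ioi_ofReal_sub, hf.lintegral_Iic_ofReal_sub]
  have hint : ∀ a b, IntegrableOn (fun z => derivWithin f (Ioi z) z) (Ioc a b) :=
    fun a b => hf.monotone_rightDeriv.intervalIntegrable.1
  have hc : ∀ a b : ℝ, IntegrableOn (fun _ => derivWithin f (Ioi 0) 0) (Ioc a b) :=
    fun a b => integrableOn_const measure_Ioc_lt_top.ne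
  rcases le_or_gt 0 t with ht | ht
  · have hI : IntegrableOn (fun z => derivWithin f (Ioi z) z - derivWithin f (Ioi 0) 0)
        (Ioc 0 t) := (hint 0 t).sub (hc 0 t)
    rw [Ico_eq_empty (not_lt.2 ht), Measure.restrict_empty, lintegral_zero_measure, add_zero,
      setLIntegral_congr Ioo_ae_eq_Ioc, ← ofReal_integral_eq_lintegral_ofReal hI
        (ae_restrict_of_forall_mem measurableSet_Ioc fun z hz =>
          sub_nonneg.2 (hf.monotone_rightDeriv hz.1.le)),
      integral_sub (hint 0 t) (hc 0 t), hf.integral_Ioc_rightDeriv ht, setIntegral_const,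
      Real.volume_real_Ioc_of_le ht, smul_eq_mul]
    ring_nf
  · have hI : IntegrableOn (fun z => derivWithin f (Ioi 0) 0 - derivWithin f (Ioi z) z)
        (Ioc t 0) := (hc t 0).sub (hint t 0)
    rw [Ioo_eq_empty (not_lt.2 ht.le), Measure.restrict_empty, lintegral_zero_measure, zero_add,
      setLIntegral_congr Ico_ae_eq_Ioc, ← ofReal_integral_eq_lintegral_ofReal hI
        (ae_restrict_of_forall_mem measurableSet_Ioc fun z hz =>
          sub_nonneg.2 (hf.monotone_rightDeriv hz.2)),
      integral_sub (hc t 0) (hint t 0), hf.integral_Ioc_rightDeriv ht.le, setIntegral_const,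
      Real.volume_real_Ioc_of_le ht.le, smul_eq_mul]
    ring_nf

variable {α : Type*} [MeasurableSpace α] {μ : Measure α}

lemma lintegral_ofReal_sub_affine_eq [SFinite μ] {D : α → ℝ} (hD : Measurable D) :
    ∫⁻ x, ENNReal.ofReal (f (D x) - (f 0 + derivWithin f (Ioi 0) 0 * D x)) ∂μ =
      ∫⁻ a in Ioi 0, ∫⁻ x, ENNReal.ofReal (D x - a) ∂μ ∂hf.rightDerivStieltjes.measure +
        ∫⁻ a in Iic 0, ∫⁻ x, ENNReal.ofReal (a - D x) ∂μ ∂hf.rightDerivStieltjes.measure := by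
  have h₁ : Measurable (Function.uncurry fun x a => ENNReal.ofReal (D x - a)) :=
    ((hD.comp measurable_fst).sub measurable_snd).ennreal_ofReal
  have h₂ : Measurable (Function.uncurry fun x a => ENNReal.ofReal (a - D x)) :=
    (measurable_snd.sub (hD.comp measurable_fst)).ennreal_ofReal
  simp_rw [hf.ofReal_sub_affine_eq_lintegral]
  rw [lintegral_add_left h₁.lintegral_prod_right, lintegral_lintegral_swap h₁.aemeasurable,
    lintegral_lintegral_swap h₂.aemeasurable]

lemma lintegral_ofReal_sub_affine_le [SFinite μ] {D₁ D₂ : α → ℝ} (hD₁ : Measurable D₁)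
    (hD₂ : Measurable D₂)
    (hpos : ∀ a, ∫⁻ x, ENNReal.ofReal (D₁ x - a) ∂μ ≤ ∫⁻ x, ENNReal.ofReal (D₂ x - a) ∂μ)
    (hneg : ∀ a, ∫⁻ x, ENNReal.ofReal (a - D₁ x) ∂μ ≤ ∫⁻ x, ENNReal.ofReal (a - D₂ x) ∂μ) :
    ∫⁻ x, ENNReal.ofReal (f (D₁ x) - (f 0 + derivWithin f (Ioi 0) 0 * D₁ x)) ∂μ ≤
      ∫⁻ x, ENNReal.ofReal (f (D₂ x) - (f 0 + derivWithin f (Ioi 0) 0 * D₂ x)) ∂μ := by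
  rw [hf.lintegral_ofReal_sub_affine_eq hD₁, hf.lintegral_ofReal_sub_affine_eq hD₂]
  exact add_le_add (lintegral_mono fun a => hpos a) (lintegral_mono fun a => hneg a)

theorem lintegral_ofReal_comp_le [IsFiniteMeasure μ] (hf0 : ∀ t, 0 ≤ f t) {D₁ D₂ : α → ℝ}
    (hD₁ : Measurable D₁) (hD₂ : Measurable D₂) (hD₁i : Integrable D₁ μ)
    (hD₂i : Integrable D₂ μ) (hmean : ∫ x, D₁ x ∂μ = ∫ x, D₂ x ∂μ)
    (hpos : ∀ a, ∫⁻ x, ENNReal.ofReal (D₁ x - a) ∂μ ≤ ∫⁻ x, ENNReal.ofReal (D₂ x - a) ∂μ)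
    (hneg : ∀ a, ∫⁻ x, ENNReal.ofReal (a - D₁ x) ∂μ ≤ ∫⁻ x, ENNReal.ofReal (a - D₂ x) ∂μ) :
    ∫⁻ x, ENNReal.ofReal (f (D₁ x)) ∂μ ≤ ∫⁻ x, ENNReal.ofReal (f (D₂ x)) ∂μ := by
  have hℓ : ∀ D : α → ℝ, Integrable D μ →
      Integrable (fun x => f 0 + derivWithin f (Ioi 0) 0 * D x) μ :=
    fun D hD => (integrable_const _).add (hD.const_mul _)
  refine lintegral_ofReal_le_of_lintegral_ofReal_sub_le (hf.continuous.measurable.comp hD₁)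
    (hf.continuous.measurable.comp hD₂) (fun x => hf0 _) (fun x => hf0 _) (hℓ D₁ hD₁i)
    (hℓ D₂ hD₂i) (fun x => hf.add_rightDeriv_zero_mul_le _)
    (fun x => hf.add_rightDeriv_zero_mul_le _) ?_
    (hf.lintegral_ofReal_sub_affine_le hD₁ hD₂ hpos hneg)
  rw [integral_add (integrable_const _) (hD₁i.const_mul _),
    integral_add (integrable_const _) (hD₂i.const_mul _), integral_const_mul, integral_const_mul,
    hmean]

end ConvexOn

namespace ProbabilityTheory

noncomputable def monotoneRearrangement (μ ν : Measure ℝ) (x : ℝ) : ℝ :=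
  quantile (cdf ν) (cdf μ x)

section Rearrangement

variable (μ ν : Measure ℝ)

lemma measurable_monotoneRearrangement : Measurable (monotoneRearrangement μ ν) :=
  ((cdf ν).measurable_quantile (tendsto_cdf_atBot ν) (tendsto_cdf_atTop ν)).comp
    (monotone_cdf μ).measurable

variable [IsProbabilityMeasure μ] [IsProbabilityMeasure ν] [NullSingletonClass μ]

lemma map_monotoneRearrangement : μ.map (monotoneRearrangement μ ν) = ν := by
  rw [show monotoneRearrangement μ ν = quantile (cdf ν) ∘ cdf μ from rfl, ← Measure.map_map
    ((cdf ν).measurable_quantile (tendsto_cdf_atBot ν) (tendsto_cdf_atTop ν))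
    (monotone_cdf μ).measurable, map_cdf,
    (cdf ν).map_quantile (tendsto_cdf_atBot ν) (tendsto_cdf_atTop ν), measure_cdf]

lemma measure_Iic_inter_preimage_monotoneRearrangement (s z : ℝ) :
    μ (Iic s ∩ monotoneRearrangement μ ν ⁻¹' Iic z) = min (μ (Iic s)) (ν (Iic z)) := by
  have hT : monotoneRearrangement μ ν ⁻¹' Iic z =ᵐ[μ] {x | cdf μ x ≤ cdf ν z} :=
    ae_cdf_mem_Ioo.mono fun x hx => propext
      ((cdf ν).quantile_le_iff (tendsto_cdf_atBot ν) (tendsto_cdf_atTop ν) hx z)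
  have hs : Iic s =ᵐ[μ] {x | cdf μ x ≤ cdf μ s} := by
    refine ae_eq_of_subset_of_measure_ge (fun x hx => monotone_cdf μ hx) ?_
      measurableSet_Iic.nullMeasurableSet (measure_ne_top μ _)
    rw [measure_cdf_le, min_eq_left (cdf_le_one μ s), ofReal_cdf]
  rw [measure_congr (hs.inter hT), ← ofPred_and]
  simp_rw [← le_min_iff]
  rw [measure_cdf_le, min_eq_left (min_le_left _ _ |>.trans (cdf_le_one μ s)),
    ENNReal.ofReal_min, ofReal_cdf, ofReal_cdf]

lemma measure_Iic_inter_preimage_le_monotoneRearrangement {ψ : ℝ → ℝ} (hψ : Measurable ψ)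
    (hψν : μ.map ψ = ν) (s z : ℝ) :
    μ (Iic s ∩ ψ ⁻¹' Iic z) ≤ μ (Iic s ∩ monotoneRearrangement μ ν ⁻¹' Iic z) := by
  rw [measure_Iic_inter_preimage_monotoneRearrangement, ← hψν,
    Measure.map_apply hψ measurableSet_Iic]
  exact le_min (measure_mono inter_subset_left) (measure_mono inter_subset_right)

lemma lintegral_ofReal_monotoneRearrangement_sub_le {ψ : ℝ → ℝ} (hψ : Measurable ψ)
    (hψν : μ.map ψ = ν) (a : ℝ) :
    ∫⁻ x, ENNReal.ofReal (monotoneRearrangement μ ν x - x - a) ∂μ ≤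
      ∫⁻ x, ENNReal.ofReal (ψ x - x - a) ∂μ := by
  have hIic : ∀ z, {x : ℝ | x + a ≤ z} = Iic (z - a) := fun z => by ext; simp [le_sub_iff_add_le]
  simp_rw [sub_sub]
  refine lintegral_ofReal_sub_le_of_measure_inter_le (measurable_add_const a)
    (measurable_monotoneRearrangement μ ν) hψ fun z => ?_
  rw [hIic]
  exact measure_Iic_inter_preimage_le_monotoneRearrangement μ ν hψ hψν (z - a) z

lemma lintegral_ofReal_sub_monotoneRearrangement_le {ψ : ℝ → ℝ} (hψ : Measurable ψ)
    (hψν : μ.map ψ = ν) (a : ℝ) :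
    ∫⁻ x, ENNReal.ofReal (a - (monotoneRearrangement μ ν x - x)) ∂μ ≤
      ∫⁻ x, ENNReal.ofReal (a - (ψ x - x)) ∂μ := by
  have hIic : ∀ z, {x : ℝ | x + a ≤ z} = Iic (z - a) := fun z => by ext; simp [le_sub_iff_add_le]
  have hmarg : ∀ {Θ : ℝ → ℝ}, Measurable Θ → μ.map Θ = ν → ∀ z, μ {x | Θ x ≤ z} = ν (Iic z) :=
    fun hΘ hΘν z => by rw [← hΘν, Measure.map_apply hΘ measurableSet_Iic]; rfl
  simp_rw [sub_sub_eq_add_sub, add_comm a]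
  refine lintegral_ofReal_sub_le_of_measure_inter_le_of_measure_eq (measurable_add_const a)
    (measurable_monotoneRearrangement μ ν) hψ (fun z => ?_) fun z => ?_
  · rw [hIic]
    exact measure_Iic_inter_preimage_le_monotoneRearrangement μ ν hψ hψν (z - a) z
  · rw [hmarg (measurable_monotoneRearrangement μ ν) (map_monotoneRearrangement μ ν),
      hmarg hψ hψν]

end Rearrangement

end ProbabilityTheory

/-- **Optimality of the monotone rearrangement in one dimension.**
If `μ, ν` are Borel probability measures on `ℝ` with finite first moments, `μ` has
no atoms, and `T` is the monotone nondecreasing rearrangement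
`T x = inf { y | ν(−∞, y] ≥ μ(−∞, x] }`, then `T_#μ = ν` and `T` minimizes
`∫ h(ψ x − x) dμ` over transport maps `ψ`, for every convex `h : ℝ → [0,∞)`. -/
theorem monotone_rearrangement_optimal
    (μ ν : Measure ℝ) [IsProbabilityMeasure μ] [IsProbabilityMeasure ν]
    (hμ1 : ∫⁻ x, ENNReal.ofReal |x| ∂μ < ⊤)
    (hν1 : ∫⁻ y, ENNReal.ofReal |y| ∂ν < ⊤)
    (hatom : ∀ x : ℝ, μ {x} = 0)
    (T : ℝ → ℝ)
    (hT : ∀ x, T x = sInf {y : ℝ | μ (Set.Iic x) ≤ ν (Set.Iic y)}) :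
    Measurable T ∧ μ.map T = ν ∧
    ∀ h : ℝ → ℝ, ConvexOn ℝ Set.univ h → (∀ t, 0 ≤ h t) →
      ∀ ψ : ℝ → ℝ, Measurable ψ → μ.map ψ = ν →
        ∫⁻ x, ENNReal.ofReal (h (T x - x)) ∂μ ≤
          ∫⁻ x, ENNReal.ofReal (h (ψ x - x)) ∂μ := by
  have : NullSingletonClass μ := ⟨hatom⟩
  obtain rfl : T = monotoneRearrangement μ ν := funext fun x => by
    rw [hT, monotoneRearrangement, quantile]
    congr 1
    ext y
    rw [mem_ofPred_eq, mem_ofPred_eq, ← ofReal_cdf, ← ofReal_cdf,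
      ENNReal.ofReal_le_ofReal_iff (cdf_nonneg ν y)]
  have hT : MeasurePreserving (monotoneRearrangement μ ν) μ ν :=
    ⟨measurable_monotoneRearrangement μ ν, map_monotoneRearrangement μ ν⟩
  refine ⟨hT.measurable, hT.map_eq, fun h hh h0 ψ hψ hψν => ?_⟩
  have hid : ∀ m : Measure ℝ, ∫⁻ x, ENNReal.ofReal |x| ∂m < ⊤ → Integrable (fun x : ℝ => x) m :=
    fun m hm => ⟨aestronglyMeasurable_id, by
      simpa [HasFiniteIntegral, Real.enorm_eq_ofReal_abs] using hm⟩
  have hdisp : ∀ Θ : ℝ → ℝ, MeasurePreserving Θ μ ν →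
      Integrable (fun x => Θ x - x) μ ∧ ∫ x, (Θ x - x) ∂μ = ∫ y, y ∂ν - ∫ x, x ∂μ := by
    intro Θ hΘ
    have hΘi : Integrable Θ μ := hΘ.integrable_comp_of_integrable (hid ν hν1)
    refine ⟨hΘi.sub (hid μ hμ1), ?_⟩
    rw [integral_sub hΘi (hid μ hμ1), ← hΘ.map_eq,
      integral_map hΘ.measurable.aemeasurable measurable_id'.aestronglyMeasurable]
  obtain ⟨hTi, hTmean⟩ := hdisp _ hT
  obtain ⟨hψi, hψmean⟩ := hdisp ψ ⟨hψ, hψν⟩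
  exact hh.lintegral_ofReal_comp_le h0 (hT.measurable.sub measurable_id) (hψ.sub measurable_id)
    hTi hψi (hTmean.trans hψmean.symm)
    (lintegral_ofReal_monotoneRearrangement_sub_le μ ν hψ hψν)
    (lintegral_ofReal_sub_monotoneRearrangement_le μ ν hψ hψν)
end
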